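/- arXiv:2111.00798 — 6 statements merged into one kernel-verified Lean document; each statement's English description precedes it below -/
import Mathlib

section
/- Let Y1 and Y2 be positive random variables on a common probability space with continuous cumulative distribution functions F1 and F2, and let c > 0. Then 2·|d(Y1, Y2) − D(c, Y1, Y2)| ≤ E[Δ(c, Y1)] + E[Δ(c, Y2/c)], where Δ(c, x) = |F2(c·x) − F1(x)|. -/
open MeasureTheory

lemma rfa_key_abs (a b a' b' : ℝ) : abs (|a - b| - |a' - b'|) ≤ |a - a'| + |b - b'| := by
  have h1 : abs (|a - b| - |a' - b'|) ≤ |(a - b) - (a' - b')| :=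
    abs_abs_sub_abs_le_abs_sub _ _
  have h2 : |(a - b) - (a' - b')| = |(a - a') - (b - b')| := by ring_nf
  have h3 : |(a - a') - (b - b')| ≤ |a - a'| + |b - b'| := abs_sub _ _
  linarith

/-- With `Δ(c, x) = |F2(c·x) − F1(x)|`, the F-madogram `d` and the
RFA-madogram `D(c)` satisfy `2·|d − D(c)| ≤ E[Δ(c, Y1)] + E[Δ(c, Y2/c)]`. -/
theorem rfa_madogram_fmadogram_diff_bound
    {Ω : Type*} [MeasurableSpace Ω] (μ : Measure Ω) [IsProbabilityMeasure μ]
    (Y1 Y2 : Ω → ℝ) (hY1meas : Measurable Y1) (hY2meas : Measurable Y2)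
    (hY1pos : ∀ ω, 0 < Y1 ω) (hY2pos : ∀ ω, 0 < Y2 ω)
    (F1 F2 : ℝ → ℝ)
    (hF1 : ∀ x, F1 x = (μ {ω | Y1 ω ≤ x}).toReal)
    (hF2 : ∀ x, F2 x = (μ {ω | Y2 ω ≤ x}).toReal)
    (hF1cont : Continuous F1) (hF2cont : Continuous F2)
    (c : ℝ) (hc : 0 < c)
    (Δ : ℝ → ℝ → ℝ) (hΔ : ∀ c' x, Δ c' x = |F2 (c' * x) - F1 x|) :
    2 * |(1 / 2) * (∫ ω, |F1 (Y1 ω) - F2 (Y2 ω)| ∂μ)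
          - (1 / 2) * (∫ ω, |F2 (c * Y1 ω) - F1 (Y2 ω / c)| ∂μ)|
      ≤ (∫ ω, Δ c (Y1 ω) ∂μ) + ∫ ω, Δ c (Y2 ω / c) ∂μ := by
  have hF1b : ∀ x, |F1 x| ≤ 1 := by
    intro x
    rw [hF1, abs_of_nonneg ENNReal.toReal_nonneg]
    exact ENNReal.toReal_le_of_le_ofReal one_pos.le (by simpa using prob_le_one)
  have hF2b : ∀ x, |F2 x| ≤ 1 := by
    intro x
    rw [hF2, abs_of_nonneg ENNReal.toReal_nonneg]
    exact ENNReal.toReal_le_of_le_ofReal one_pos.le (by simpa using prob_le_one)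
  set g1 : Ω → ℝ := fun ω => |F1 (Y1 ω) - F2 (Y2 ω)| with hg1
  set g2 : Ω → ℝ := fun ω => |F2 (c * Y1 ω) - F1 (Y2 ω / c)| with hg2
  set h1 : Ω → ℝ := fun ω => Δ c (Y1 ω) with hh1
  set h2 : Ω → ℝ := fun ω => Δ c (Y2 ω / c) with hh2
  have hcne : c ≠ 0 := hc.ne'
  -- pointwise bound
  have hpt : ∀ ω, |g1 ω - g2 ω| ≤ h1 ω + h2 ω := by
    intro ω
    have key := rfa_key_abs (F1 (Y1 ω)) (F2 (Y2 ω)) (F2 (c * Y1 ω)) (F1 (Y2 ω / c))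
    have e1 : h1 ω = |F1 (Y1 ω) - F2 (c * Y1 ω)| := by
      show Δ c (Y1 ω) = _; rw [hΔ, abs_sub_comm]
    have e2 : h2 ω = |F2 (Y2 ω) - F1 (Y2 ω / c)| := by
      show Δ c (Y2 ω / c) = _; rw [hΔ, mul_div_cancel₀ _ hcne]
    have e3 : g2 ω = |F2 (c * Y1 ω) - F1 (Y2 ω / c)| := rfl
    rw [e1, e2]
    simpa [hg1, hg2, abs_sub_comm (F2 (c * Y1 ω)) (F1 (Y2 ω / c))] using key
  -- measurability
  have hm1 : Measurable fun ω => F1 (Y1 ω) := hF1cont.measurable.comp hY1meas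
  have hm2 : Measurable fun ω => F2 (Y2 ω) := hF2cont.measurable.comp hY2meas
  have hm3 : Measurable fun ω => F2 (c * Y1 ω) :=
    hF2cont.measurable.comp ((measurable_const_mul c).comp hY1meas)
  have hm4 : Measurable fun ω => F1 (Y2 ω / c) :=
    hF1cont.measurable.comp (hY2meas.div_const c)
  have hmg1 : Measurable g1 := (hm1.sub hm2).abs
  have hmg2 : Measurable g2 := (hm3.sub hm4).abs
  have hmh1 : Measurable h1 := by
    have : h1 = fun ω => |F2 (c * Y1 ω) - F1 (Y1 ω)| := by
      funext ω; exact hΔ c (Y1 ω)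
    rw [this]; exact (hm3.sub hm1).abs
  have hmh2 : Measurable h2 := by
    have : h2 = fun ω => |F2 (Y2 ω) - F1 (Y2 ω / c)| := by
      funext ω; rw [show h2 ω = Δ c (Y2 ω / c) from rfl, hΔ, mul_div_cancel₀ _ hcne]
    rw [this]; exact (hm2.sub hm4).abs
  -- integrability
  have hbdd : ∀ (f : Ω → ℝ), Measurable f → (∀ ω, |f ω| ≤ 2) → Integrable f μ := by
    intro f hf hb
    exact (integrable_const (2:ℝ)).mono' hf.aestronglyMeasurable
      (Filter.Eventually.of_forall fun ω => by simpa using hb ω)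
  have hig1 : Integrable g1 μ := hbdd g1 hmg1 fun ω => by
    rw [hg1, abs_abs]
    calc |F1 (Y1 ω) - F2 (Y2 ω)| ≤ |F1 (Y1 ω)| + |F2 (Y2 ω)| := abs_sub _ _
      _ ≤ 2 := by have := hF1b (Y1 ω); have := hF2b (Y2 ω); linarith
  have hig2 : Integrable g2 μ := hbdd g2 hmg2 fun ω => by
    rw [hg2, abs_abs]
    calc |F2 (c * Y1 ω) - F1 (Y2 ω / c)| ≤ |F2 (c * Y1 ω)| + |F1 (Y2 ω / c)| := abs_sub _ _
      _ ≤ 2 := by have := hF2b (c * Y1 ω); have := hF1b (Y2 ω / c); linarith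
  have hih1 : Integrable h1 μ := hbdd h1 hmh1 fun ω => by
    show |Δ c (Y1 ω)| ≤ 2
    rw [hΔ, abs_abs]
    calc |F2 (c * Y1 ω) - F1 (Y1 ω)| ≤ |F2 (c * Y1 ω)| + |F1 (Y1 ω)| := abs_sub _ _
      _ ≤ 2 := by have := hF2b (c * Y1 ω); have := hF1b (Y1 ω); linarith
  have hih2 : Integrable h2 μ := hbdd h2 hmh2 fun ω => by
    show |Δ c (Y2 ω / c)| ≤ 2
    rw [hΔ, abs_abs]
    calc |F2 (c * (Y2 ω / c)) - F1 (Y2 ω / c)| ≤ |F2 (c * (Y2 ω / c))| + |F1 (Y2 ω / c)| :=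
        abs_sub _ _
      _ ≤ 2 := by have := hF2b (c * (Y2 ω / c)); have := hF1b (Y2 ω / c); linarith
  -- main chain
  have heq : 2 * |(1/2) * (∫ ω, g1 ω ∂μ) - (1/2) * (∫ ω, g2 ω ∂μ)|
      = |(∫ ω, g1 ω ∂μ) - (∫ ω, g2 ω ∂μ)| := by
    rw [show (1/2:ℝ) * (∫ ω, g1 ω ∂μ) - (1/2) * (∫ ω, g2 ω ∂μ)
        = ((∫ ω, g1 ω ∂μ) - (∫ ω, g2 ω ∂μ)) / 2 by ring, abs_div, abs_two]
    ring
  rw [heq]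
  calc |(∫ ω, g1 ω ∂μ) - (∫ ω, g2 ω ∂μ)| = |∫ ω, g1 ω - g2 ω ∂μ| := by
        rw [integral_sub hig1 hig2]
    _ ≤ ∫ ω, |g1 ω - g2 ω| ∂μ := by
        simpa [Real.norm_eq_abs] using
          norm_integral_le_integral_norm (μ := μ) (fun ω => g1 ω - g2 ω)
    _ ≤ ∫ ω, h1 ω + h2 ω ∂μ := by
        apply integral_mono ((hig1.sub hig2).abs) (hih1.add hih2) hpt
    _ = (∫ ω, h1 ω ∂μ) + ∫ ω, h2 ω ∂μ := integral_add hih1 hih2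
end

section
/- Let H be a probability measure on [0,1]² with cumulative distribution function H(x, y) = H([0,x] × [0,y]), and let a : [0,1] → [0,1] be a continuous strictly increasing bijection with inverse a⁻. Then ∫_{[0,1]²} (1/2)·|a(u1) − a⁻(u2)| dH(u1, u2) = (1/2)·( ∫₀¹ H(a⁻(u), 1) du + ∫₀¹ H(1, a(u)) du ) − ∫₀¹ H(a⁻(u), a(u)) du. -/
open MeasureTheory

/-- The bivariate cumulative distribution function `H(x, y) = H([0,x] × [0,y])`
of a measure on the unit square. -/
noncomputable def cdf2 (μ : Measure (ℝ × ℝ)) (x y : ℝ) : ℝ :=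
  (μ (Set.Icc 0 x ×ˢ Set.Icc 0 y)).toReal

/-!
For `s, t ∈ [0,1]`, `|s - t|` is the Lebesgue measure of the set of `u ∈ [0,1]` at which exactly
one of `s ≤ u`, `t ≤ u` holds. For `s = a(x)` and `t = a⁻(y)` these conditions read `x ≤ a⁻(u)`
and `y ≤ a(u)`, i.e. `(x, y) ∈ A_u := [0,a⁻(u)] × [0,1]` and `(x, y) ∈ B_u := [0,1] × [0,a(u)]`.
Integrating against `H` and exchanging the two integrals turns the left-hand side into
`(1/2) ∫₀¹ H(A_u ∆ B_u) du`, and `H(A ∆ B) = H(A) + H(B) - 2 H(A ∩ B)` with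
`A_u ∩ B_u = [0,a⁻(u)] × [0,a(u)]`.
-/

open Set
open scoped symmDiff

def GaloisConnectionOn {α β : Type*} [Preorder α] [Preorder β] (l : α → β) (u : β → α)
    (s : Set α) (t : Set β) : Prop :=
  ∀ a ∈ s, ∀ b ∈ t, l a ≤ b ↔ a ≤ u b

namespace GaloisConnectionOn

variable {α β : Type*} [Preorder α] [Preorder β] {l : α → β} {u : β → α} {s : Set α} {t : Set β}

theorem monotoneOn_l (gc : GaloisConnectionOn l u s t) (hl : MapsTo l s t) : MonotoneOn l s :=
  fun _ ha _ hb hab => (gc _ ha _ (hl hb)).2 (hab.trans ((gc _ hb _ (hl hb)).1 le_rfl))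

theorem monotoneOn_u (gc : GaloisConnectionOn l u s t) (hu : MapsTo u t s) : MonotoneOn u t :=
  fun _ ha _ hb hab => (gc _ (hu ha) _ hb).1 (((gc _ (hu ha) _ ha).2 le_rfl).trans hab)

end GaloisConnectionOn

namespace StrictMonoOn

variable {α β : Type*} [LinearOrder α] [Preorder β] {f : α → β} {g : β → α} {s : Set α}
  {t : Set β}

theorem galoisConnectionOn (hf : StrictMonoOn f s) (hg : MapsTo g t s) (hfg : LeftInvOn f g t) :
    GaloisConnectionOn f g s t := fun a ha b hb => by
  rw [← hf.le_iff_le ha (hg hb), hfg hb]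

theorem galoisConnectionOn_symm (hf : StrictMonoOn f s) (hg : MapsTo g t s)
    (hfg : LeftInvOn f g t) : GaloisConnectionOn g f t s := fun b hb a ha => by
  rw [← hf.le_iff_le (hg hb) ha, hfg hb]

end StrictMonoOn

theorem MeasureTheory.measureReal_symmDiff_eq_add_sub_inter {α : Type*} [MeasurableSpace α]
    {μ : Measure α} [IsFiniteMeasure μ] {s t : Set α} (hs : MeasurableSet s)
    (ht : MeasurableSet t) :
    μ.real (s ∆ t) = μ.real s + μ.real t - 2 * μ.real (s ∩ t) := by
  have hst := measureReal_sdiff_add_inter (μ := μ) (s := s) ht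
  have hts := measureReal_sdiff_add_inter (μ := μ) (s := t) hs
  rw [inter_comm] at hts
  rw [measureReal_symmDiff_eq hs ht]
  linarith

theorem integral_indicator_Ici_symmDiff_Ici {a b s t : ℝ} (hs : s ∈ Icc a b) (ht : t ∈ Icc a b) :
    ∫ u in a..b, (Ici s ∆ Ici t).indicator 1 u = |s - t| := by
  have hvol : ∀ r ∈ Icc a b, (volume.restrict (Icc a b)).real (Ici r) = b - r := fun r hr => by
    rw [measureReal_restrict_apply measurableSet_Ici,
      show Ici r ∩ Icc a b = Icc r b from ext fun x => ⟨fun h => ⟨h.1, h.2.2⟩,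
        fun h => ⟨h.1, hr.1.trans h.1, h.2⟩⟩, Real.volume_real_Icc_of_le hr.2]
  rw [intervalIntegral.integral_of_le (hs.1.trans hs.2), ← integral_Icc_eq_integral_Ioc,
    integral_indicator_one (measurableSet_Ici.symmDiff measurableSet_Ici),
    measureReal_symmDiff_eq_add_sub_inter measurableSet_Ici measurableSet_Ici, Ici_inter_Ici,
    hvol s hs, hvol t ht, hvol _ ⟨hs.1.trans (le_max_left s t), max_le hs.2 ht.2⟩,
    ← max_sub_min_eq_abs']
  linarith [min_add_max s t]

theorem measureReal_symmDiff_Icc_prod_eq_cdf2 (μ : Measure (ℝ × ℝ)) [IsFiniteMeasure μ] {x y : ℝ}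
    (hx : x ≤ 1) (hy : y ≤ 1) :
    μ.real ((Icc 0 x ×ˢ Icc 0 1) ∆ (Icc 0 1 ×ˢ Icc 0 y))
      = cdf2 μ x 1 + cdf2 μ 1 y - 2 * cdf2 μ x y := by
  rw [measureReal_symmDiff_eq_add_sub_inter (measurableSet_Icc.prod measurableSet_Icc)
    (measurableSet_Icc.prod measurableSet_Icc), prod_inter_prod, Icc_inter_Icc, Icc_inter_Icc,
    min_eq_left hx, min_eq_right hy, sup_idem]
  rfl

theorem cdf2_mono (μ : Measure (ℝ × ℝ)) [IsFiniteMeasure μ] {x x' y y' : ℝ} (hx : x ≤ x')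
    (hy : y ≤ y') : cdf2 μ x y ≤ cdf2 μ x' y' :=
  measureReal_mono (prod_mono (Icc_subset_Icc_right hx) (Icc_subset_Icc_right hy))

theorem MonotoneOn.cdf2 (μ : Measure (ℝ × ℝ)) [IsFiniteMeasure μ] {s : Set ℝ} {f g : ℝ → ℝ}
    (hf : MonotoneOn f s) (hg : MonotoneOn g s) : MonotoneOn (fun u => cdf2 μ (f u) (g u)) s :=
  fun _ hx _ hy hxy => cdf2_mono μ (hf hx hy hxy) (hg hx hy hxy)

theorem integral_abs_sub_eq_integral_cdf2 (μ : Measure (ℝ × ℝ)) [IsFiniteMeasure μ]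
    (hsupp : ∀ᵐ p ∂μ, p ∈ Icc (0 : ℝ) 1 ×ˢ Icc (0 : ℝ) 1) {f g : ℝ → ℝ}
    (hf : MapsTo f (Icc 0 1) (Icc 0 1)) (hg : MapsTo g (Icc 0 1) (Icc 0 1))
    (hfg : GaloisConnectionOn f g (Icc 0 1) (Icc 0 1))
    (hgf : GaloisConnectionOn g f (Icc 0 1) (Icc 0 1)) :
    ∫ p, |f p.1 - g p.2| ∂μ
      = ∫ u in (0 : ℝ)..1, (cdf2 μ (g u) 1 + cdf2 μ 1 (f u) - 2 * cdf2 μ (g u) (f u)) := by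
  -- `f` and `g` are only controlled on `[0,1]`; monotone extensions make the integrand below
  -- jointly measurable.
  obtain ⟨f', hf'_mono, hff'⟩ := (hfg.monotoneOn_l hf).exists_monotone_extension
    (bddBelow_Icc.mono hf.image_subset) (bddAbove_Icc.mono hf.image_subset)
  obtain ⟨g', hg'_mono, hgg'⟩ := (hfg.monotoneOn_u hg).exists_monotone_extension
    (bddBelow_Icc.mono hg.image_subset) (bddAbove_Icc.mono hg.image_subset)
  set E : ℝ → Set (ℝ × ℝ) := fun u => (Icc 0 (g' u) ×ˢ Icc 0 1) ∆ (Icc 0 1 ×ˢ Icc 0 (f' u))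
  have hE : ∀ u, MeasurableSet (E u) := fun u =>
    (measurableSet_Icc.prod measurableSet_Icc).symmDiff (measurableSet_Icc.prod measurableSet_Icc)
  have hE_prod : MeasurableSet {z : (ℝ × ℝ) × ℝ | z.1 ∈ E z.2} := by
    have hf'_meas := hf'_mono.measurable
    have hg'_meas := hg'_mono.measurable
    simp only [E, mem_symmDiff, mem_prod, mem_Icc]
    measurability
  have h_layer : ∀ᵐ p ∂μ, |f p.1 - g p.2| = ∫ u in Ioc 0 1, (E u).indicator 1 p := by
    filter_upwards [hsupp] with p hp
    rw [← integral_indicator_Ici_symmDiff_Ici (hf hp.1) (hg hp.2),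
      intervalIntegral.integral_of_le zero_le_one]
    refine setIntegral_congr_fun measurableSet_Ioc fun u hu => indicator_eq_indicator ?_ rfl
    have hu : u ∈ Icc (0 : ℝ) 1 := Ioc_subset_Icc_self hu
    simp only [E, mem_symmDiff, mem_Ici, mem_prod, mem_Icc, ← hff' hu, ← hgg' hu,
      hfg _ hp.1 _ hu, hgf _ hp.2 _ hu]
    grind
  set G : ℝ × ℝ → ℝ → ℝ := fun p u => (E u).indicator 1 p
  have h_int : Integrable (Function.uncurry G) (μ.prod (volume.restrict (Ioc 0 1))) := by
    refine .of_bound ?_ 1 (ae_of_all _ fun z => (norm_indicator_le_norm_self _ _).trans (by simp))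
    have hG : Function.uncurry G = {z : (ℝ × ℝ) × ℝ | z.1 ∈ E z.2}.indicator 1 := by
      ext z
      exact indicator_eq_indicator Iff.rfl rfl
    exact hG ▸ (measurable_one.indicator hE_prod).aestronglyMeasurable
  calc ∫ p, |f p.1 - g p.2| ∂μ = ∫ p, (∫ u in Ioc 0 1, G p u) ∂μ :=
        integral_congr_ae h_layer
    _ = ∫ u in Ioc 0 1, ∫ p, G p u ∂μ := integral_integral_swap h_int
    _ = _ := by
      rw [intervalIntegral.integral_of_le zero_le_one]
      refine setIntegral_congr_fun measurableSet_Ioc fun u hu => ?_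
      have hu : u ∈ Icc (0 : ℝ) 1 := Ioc_subset_Icc_self hu
      rw [integral_indicator_one (hE u), measureReal_symmDiff_Icc_prod_eq_cdf2 μ
        (hgg' hu ▸ (hg hu).2) (hff' hu ▸ (hf hu).2), hff' hu, hgg' hu]

theorem lemma_H_identity_general
    (μ : Measure (ℝ × ℝ)) [IsProbabilityMeasure μ]
    (hsupp : ∀ᵐ p ∂μ, p ∈ Set.Icc (0 : ℝ) 1 ×ˢ Set.Icc (0 : ℝ) 1)
    (a ainv : ℝ → ℝ)
    (ha_mono : StrictMonoOn a (Set.Icc 0 1))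
    (ha_maps : Set.MapsTo a (Set.Icc 0 1) (Set.Icc 0 1))
    (hainv_maps : Set.MapsTo ainv (Set.Icc 0 1) (Set.Icc 0 1))
    (h_right : ∀ u ∈ Set.Icc (0 : ℝ) 1, a (ainv u) = u) :
    ∫ p, (1 / 2) * |a p.1 - ainv p.2| ∂μ
      = (1 / 2) * ((∫ u in (0 : ℝ)..1, cdf2 μ (ainv u) 1)
          + ∫ u in (0 : ℝ)..1, cdf2 μ 1 (a u))
        - ∫ u in (0 : ℝ)..1, cdf2 μ (ainv u) (a u) := by
  have hgc := ha_mono.galoisConnectionOn hainv_maps h_right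
  have ha := hgc.monotoneOn_l ha_maps
  have hainv := hgc.monotoneOn_u hainv_maps
  have hII : ∀ φ : ℝ → ℝ, MonotoneOn φ (Icc 0 1) → IntervalIntegrable φ volume 0 1 :=
    fun φ hφ => MonotoneOn.intervalIntegrable (by rwa [uIcc_of_le zero_le_one])
  have hA := hII _ (hainv.cdf2 μ (monotoneOn_const (c := (1 : ℝ))))
  have hB := hII _ ((monotoneOn_const (c := (1 : ℝ))).cdf2 μ ha)
  have hC := hII _ (hainv.cdf2 μ ha)
  rw [integral_const_mul, integral_abs_sub_eq_integral_cdf2 μ hsupp ha_maps hainv_maps hgc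
      (ha_mono.galoisConnectionOn_symm hainv_maps h_right),
    intervalIntegral.integral_sub (hA.add hB) (hC.const_mul 2),
    intervalIntegral.integral_add hA hB, intervalIntegral.integral_const_mul]
  ring

/-- **Lemma 1.** For a probability measure `H` on `[0,1]²` and a continuous
strictly increasing bijection `a : [0,1] → [0,1]` with inverse `a⁻`,
`∫ (1/2)|a(u1) − a⁻(u2)| dH = (1/2)(∫₀¹ H(a⁻(u),1) du + ∫₀¹ H(1,a(u)) du) − ∫₀¹ H(a⁻(u),a(u)) du`. -/
theorem lemma_H_identity
    (μ : Measure (ℝ × ℝ)) [IsProbabilityMeasure μ]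
    (hsupp : ∀ᵐ p ∂μ, p ∈ Set.Icc (0 : ℝ) 1 ×ˢ Set.Icc (0 : ℝ) 1)
    (a ainv : ℝ → ℝ)
    (ha_cont : ContinuousOn a (Set.Icc 0 1))
    (ha_mono : StrictMonoOn a (Set.Icc 0 1))
    (ha0 : a 0 = 0) (ha1 : a 1 = 1)
    (ha_maps : Set.MapsTo a (Set.Icc 0 1) (Set.Icc 0 1))
    (hainv_maps : Set.MapsTo ainv (Set.Icc 0 1) (Set.Icc 0 1))
    (h_left : ∀ u ∈ Set.Icc (0 : ℝ) 1, ainv (a u) = u)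
    (h_right : ∀ u ∈ Set.Icc (0 : ℝ) 1, a (ainv u) = u) :
    ∫ p, (1 / 2) * |a p.1 - ainv p.2| ∂μ
      = (1 / 2) * ((∫ u in (0 : ℝ)..1, cdf2 μ (ainv u) 1)
          + ∫ u in (0 : ℝ)..1, cdf2 μ 1 (a u))
        - ∫ u in (0 : ℝ)..1, cdf2 μ (ainv u) (a u) :=
  lemma_H_identity_general μ hsupp a ainv ha_mono ha_maps hainv_maps h_right
end

section
/- Let (Y_{1,i}, Y_{2,i})_{i ≥ 1} be independent and identically distributed copies of a pair (Y1, Y2) of positive random variables whose cumulative distribution functions F1 and F2 are continuous and strictly increasing on (0, ∞) with F1(0) = F2(0) = 0. Define the estimator D_n(c) = (1/(2n))·Σ_{i=1}^{n} |F2(c·Y_{1,i}) − F1(Y_{2,i}/c)| for c > 0. Then sup_{c > 0} |D_n(c) − D(c, Y1, Y2)| → 0 almost surely as n → ∞. -/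
/-! The summands are `|h_c|` for `h_c(y) = F₂(c y₁) − F₁(y₂/c)`, a family that is bounded by `1`,
nondecreasing in `c`, and whose mean is continuous on `(0, ∞)` with limits `−1` and `1` at the ends.
So for every `ε` the family is covered by finitely many brackets `[h_s, h_t]` of mean width `≤ ε`
(with the constants `∓1` as outer ends), and splitting into positive and negative parts turns them
into `ε`-brackets for `|h_c|`. A family with finite `ε`-brackets for every `ε` is Glivenko–Cantelli:
on the event where the strong law holds for the countably many bracket functions, the empirical
mean of each member is squeezed between those of its bracket. -/

open MeasureTheory ProbabilityTheory Filter Topology Set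

noncomputable def empiricalMean {Ω α : Type*} (X : ℕ → Ω → α) (f : α → ℝ) (n : ℕ) (ω : Ω) : ℝ :=
  (∑ i ∈ Finset.range n, f (X i ω)) / n

theorem empiricalMean_mono {Ω α : Type*} {X : ℕ → Ω → α} {f f' : α → ℝ} (h : f ≤ f') (n : ℕ)
    (ω : Ω) : empiricalMean X f n ω ≤ empiricalMean X f' n ω :=
  div_le_div_of_nonneg_right (Finset.sum_le_sum fun i _ => h (X i ω)) n.cast_nonneg

theorem abs_sub_le_max_abs_sub_add_of_le {x y a a' b b' : ℝ} (ha : a ≤ x) (hb : x ≤ b)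
    (ha' : a' ≤ y) (hb' : y ≤ b') : |x - y| ≤ max |a - a'| |b - b'| + (b' - a') := by
  rw [abs_le]
  constructor <;> linarith [neg_abs_le (a - a'), le_abs_self (b - b'),
    le_max_left |a - a'| |b - b'|, le_max_right |a - a'| |b - b'|]

theorem ContinuousAt.exists_lt_lt_sub_le {m : ℝ → ℝ} {x l ε : ℝ} (hm : ContinuousAt m x)
    (hl : l < x) (hε : 0 < ε) : ∃ s t, l < s ∧ s < x ∧ x < t ∧ m t - m s ≤ ε := by
  have hnear : ∀ᶠ y in 𝓝 x, l < y ∧ dist (m y) (m x) < ε / 2 :=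
    (eventually_gt_nhds hl).and (hm.eventually (Metric.ball_mem_nhds _ (half_pos hε)))
  obtain ⟨l', u, hx, hsub⟩ := mem_nhds_iff_exists_Ioo_subset.1 hnear
  obtain ⟨s, hl's, hsx⟩ := exists_between hx.1
  obtain ⟨t, hxt, htu⟩ := exists_between hx.2
  obtain ⟨hls, hms⟩ := hsub ⟨hl's, hsx.trans hx.2⟩
  obtain ⟨-, hmt⟩ := hsub ⟨hx.1.trans hxt, htu⟩
  refine ⟨s, t, hls, hsx, hxt, ?_⟩
  rw [Real.dist_eq, abs_lt] at hms hmt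
  linarith [hms.1, hmt.2]

theorem exists_finset_Ioo_cover_Icc {m : ℝ → ℝ} (hm : ContinuousOn m (Ioi 0)) {ε c₀ c₁ : ℝ}
    (hε : 0 < ε) (hc₀ : 0 < c₀) : ∃ T : Finset (ℝ × ℝ),
      (∀ p ∈ T, 0 < p.1 ∧ m p.2 - m p.1 ≤ ε) ∧ Icc c₀ c₁ ⊆ ⋃ p ∈ T, Ioo p.1 p.2 := by
  classical
  choose! s t hs hsx hxt hst using fun x (hx : x ∈ Ioi (0 : ℝ)) =>
    (hm.continuousAt (isOpen_Ioi.mem_nhds hx)).exists_lt_lt_sub_le hx hε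
  obtain ⟨T, hTpos, hcover⟩ := isCompact_Icc.elim_nhds_subcover (fun x => Ioo (s x) (t x))
    fun x hx => Ioo_mem_nhds (hsx x (hc₀.trans_le hx.1)) (hxt x (hc₀.trans_le hx.1))
  refine ⟨T.image fun x => (s x, t x), ?_, fun c hc => ?_⟩
  · simp only [Finset.forall_mem_image]
    exact fun x hx => ⟨hs x (hc₀.trans_le (hTpos x hx).1), hst x (hc₀.trans_le (hTpos x hx).1)⟩
  · obtain ⟨x, hxT, hcx⟩ := mem_iUnion₂.1 (hcover hc)
    exact mem_iUnion₂.2 ⟨_, Finset.mem_image_of_mem _ hxT, hcx⟩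

section Bracketing

variable {Ω α ι : Type*} [MeasurableSpace Ω] {μ : Measure Ω} {X : ℕ → Ω → α} {Z : Ω → α}

theorem dist_empiricalMean_integral_le_of_le_of_le {f l u : α → ℝ} (hl : l ≤ f) (hu : f ≤ u)
    (hlZ : Integrable (fun ω => l (Z ω)) μ) (hfZ : Integrable (fun ω => f (Z ω)) μ)
    (huZ : Integrable (fun ω => u (Z ω)) μ) (n : ℕ) (ω : Ω) :
    dist (empiricalMean X f n ω) (∫ ω, f (Z ω) ∂μ) ≤
      max (dist (empiricalMean X l n ω) (∫ ω, l (Z ω) ∂μ))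
        (dist (empiricalMean X u n ω) (∫ ω, u (Z ω) ∂μ)) +
      (∫ ω, u (Z ω) ∂μ - ∫ ω, l (Z ω) ∂μ) := by
  simpa only [Real.dist_eq] using abs_sub_le_max_abs_sub_add_of_le
    (empiricalMean_mono hl n ω) (empiricalMean_mono hu n ω)
    (integral_mono hlZ hfZ fun ω => hl (Z ω)) (integral_mono hfZ huZ fun ω => hu (Z ω))

variable [MeasurableSpace α]

/-- The bracketing number `N_[](ε, g, L¹(law Z))` is finite: finitely many brackets `[l, u]` of
mean width `≤ ε` cover the family. -/
def HasFiniteBrackets (Z : Ω → α) (μ : Measure Ω) (g : ι → α → ℝ) (ε : ℝ) : Prop :=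
  ∃ B : Finset ((α → ℝ) × (α → ℝ)),
    (∀ p ∈ B, Measurable p.1 ∧ Measurable p.2 ∧
      Integrable (fun ω => p.1 (Z ω)) μ ∧ Integrable (fun ω => p.2 (Z ω)) μ) ∧
    ∀ c, ∃ p ∈ B, p.1 ≤ g c ∧ g c ≤ p.2 ∧ ∫ ω, p.2 (Z ω) ∂μ - ∫ ω, p.1 (Z ω) ∂μ ≤ ε

theorem HasFiniteBrackets.abs {g : ι → α → ℝ} {ε : ℝ}
    (h : HasFiniteBrackets Z μ g ε) : HasFiniteBrackets Z μ (fun c => |g c|) ε := by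
  classical
  obtain ⟨B, hB, hbr⟩ := h
  refine ⟨B.image fun p => (p.1⁺ + p.2⁻, p.2⁺ + p.1⁻), ?_, fun c => ?_⟩
  · simp only [Finset.mem_image, forall_exists_index, and_imp]
    rintro _ p hp rfl
    obtain ⟨hl, hu, hlZ, huZ⟩ := hB p hp
    exact ⟨hl.posPart.add hu.negPart, hu.posPart.add hl.negPart,
      hlZ.pos_part.add huZ.neg_part, huZ.pos_part.add hlZ.neg_part⟩
  obtain ⟨p, hp, hl, hu, hw⟩ := hbr c
  obtain ⟨hlZ, huZ⟩ := (hB p hp).2.2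
  refine ⟨_, Finset.mem_image_of_mem _ hp, ?_, ?_, ?_⟩
  · show _ ≤ |g c|
    rw [← posPart_add_negPart]
    exact add_le_add ((le_iff_posPart_negPart _ _).1 hl).1 ((le_iff_posPart_negPart _ _).1 hu).2
  · show |g c| ≤ _
    rw [← posPart_add_negPart]
    exact add_le_add ((le_iff_posPart_negPart _ _).1 hu).1 ((le_iff_posPart_negPart _ _).1 hl).2
  · have hwidth : ∀ x y : ℝ, (y⁺ + x⁻) - (x⁺ + y⁻) = y - x := fun x y => by
      linear_combination posPart_sub_negPart y - posPart_sub_negPart x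
    calc _ = ∫ ω, (p.2⁺ + p.1⁻) (Z ω) - (p.1⁺ + p.2⁻) (Z ω) ∂μ :=
          (integral_sub (huZ.pos_part.add hlZ.neg_part) (hlZ.pos_part.add huZ.neg_part)).symm
      _ = ∫ ω, p.2 (Z ω) - p.1 (Z ω) ∂μ := by
          simp only [Pi.add_apply, Pi.posPart_apply, Pi.negPart_apply, hwidth]
      _ ≤ ε := by rwa [integral_sub huZ hlZ]

theorem ae_tendsto_empiricalMean (hindep : Pairwise fun i j => IndepFun (X i) (X j) μ)
    (hident : ∀ i, IdentDistrib (X i) Z μ μ) {f : α → ℝ} (hf : Measurable f)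
    (hfZ : Integrable (fun ω => f (Z ω)) μ) :
    ∀ᵐ ω ∂μ, Tendsto (empiricalMean X f · ω) atTop (𝓝 (∫ ω, f (Z ω) ∂μ)) := by
  have h0 := (hident 0).comp hf
  have hslln := strong_law_ae (fun i ω => f (X i ω)) (h0.integrable_iff.2 hfZ)
    (fun i j hij => (hindep hij).comp hf hf) fun i => ((hident i).trans (hident 0).symm).comp hf
  filter_upwards [hslln] with ω hω
  have hmean : ∫ ω, f (X 0 ω) ∂μ = ∫ ω, f (Z ω) ∂μ := h0.integral_eq
  rw [← hmean]
  simpa only [empiricalMean, smul_eq_mul, inv_mul_eq_div] using hω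

theorem HasFiniteBrackets.ae_eventually_dist_empiricalMean_lt
    (hindep : Pairwise fun i j => IndepFun (X i) (X j) μ) (hident : ∀ i, IdentDistrib (X i) Z μ μ)
    {g : ι → α → ℝ} (hg : ∀ c, Integrable (fun ω => g c (Z ω)) μ) {ε : ℝ} (hε : 0 < ε)
    (h : HasFiniteBrackets Z μ g ε) :
    ∀ᵐ ω ∂μ, ∀ᶠ n in atTop, ∀ c, dist (empiricalMean X (g c) n ω) (∫ ω, g c (Z ω) ∂μ) < 2 * ε := by
  obtain ⟨B, hB, hbr⟩ := h
  have hconv : ∀ᵐ ω ∂μ, ∀ p ∈ B,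
      Tendsto (empiricalMean X p.1 · ω) atTop (𝓝 (∫ ω, p.1 (Z ω) ∂μ)) ∧
      Tendsto (empiricalMean X p.2 · ω) atTop (𝓝 (∫ ω, p.2 (Z ω) ∂μ)) :=
    eventually_all_finset B |>.2 fun p hp => (hB p hp).elim fun hl ⟨hu, hlZ, huZ⟩ =>
      (ae_tendsto_empiricalMean hindep hident hl hlZ).and
        (ae_tendsto_empiricalMean hindep hident hu huZ)
  filter_upwards [hconv] with ω hω
  have hclose : ∀ᶠ n in atTop, ∀ p ∈ B,
      dist (empiricalMean X p.1 n ω) (∫ ω, p.1 (Z ω) ∂μ) < ε ∧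
      dist (empiricalMean X p.2 n ω) (∫ ω, p.2 (Z ω) ∂μ) < ε :=
    eventually_all_finset B |>.2 fun p hp =>
      (Metric.tendsto_nhds.1 (hω p hp).1 _ hε).and (Metric.tendsto_nhds.1 (hω p hp).2 _ hε)
  filter_upwards [hclose] with n hn c
  obtain ⟨p, hp, hl, hu, hw⟩ := hbr c
  calc _ ≤ _ := dist_empiricalMean_integral_le_of_le_of_le hl hu (hB p hp).2.2.1 (hg c)
        (hB p hp).2.2.2 n ω
    _ < ε + ε := add_lt_add_of_lt_of_le (max_lt (hn p hp).1 (hn p hp).2) hw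
    _ = 2 * ε := by ring

theorem ae_tendstoUniformly_empiricalMean_of_hasFiniteBrackets
    (hindep : Pairwise fun i j => IndepFun (X i) (X j) μ) (hident : ∀ i, IdentDistrib (X i) Z μ μ)
    {g : ι → α → ℝ} (hg : ∀ c, Integrable (fun ω => g c (Z ω)) μ)
    (hB : ∀ ε > 0, HasFiniteBrackets Z μ g ε) :
    ∀ᵐ ω ∂μ, TendstoUniformly (fun n c => empiricalMean X (g c) n ω)
      (fun c => ∫ ω, g c (Z ω) ∂μ) atTop := by
  have hfine : ∀ k : ℕ, ∀ᵐ ω ∂μ, ∀ᶠ n in atTop, ∀ c,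
      dist (empiricalMean X (g c) n ω) (∫ ω, g c (Z ω) ∂μ) < 2 * (1 / (k + 1)) := fun k =>
    (hB _ Nat.one_div_pos_of_nat).ae_eventually_dist_empiricalMean_lt hindep hident hg
      Nat.one_div_pos_of_nat
  filter_upwards [ae_all_iff.2 hfine] with ω hω
  refine Metric.tendstoUniformly_iff.2 fun ε hε => ?_
  obtain ⟨k, hk⟩ := exists_nat_one_div_lt (half_pos hε)
  filter_upwards [hω k] with n hn c
  rw [dist_comm]
  linarith [hn c]

theorem hasFiniteBrackets_of_monotoneOn [IsProbabilityMeasure μ] (hZ : AEMeasurable Z μ)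
    {g : ℝ → α → ℝ} {a b ε : ℝ} (hε : 0 < ε) (hmeas : ∀ c, Measurable (g c))
    (ha : ∀ c y, a ≤ g c y) (hb : ∀ c y, g c y ≤ b) (hmono : ∀ y, MonotoneOn (g · y) (Ioi 0))
    (hcont : ContinuousOn (fun c => ∫ ω, g c (Z ω) ∂μ) (Ioi 0))
    (h0 : Tendsto (fun c => ∫ ω, g c (Z ω) ∂μ) (𝓝[>] 0) (𝓝 a))
    (htop : Tendsto (fun c => ∫ ω, g c (Z ω) ∂μ) atTop (𝓝 b)) :
    HasFiniteBrackets Z μ (fun c : {c : ℝ // 0 < c} => g c) ε := by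
  classical
  set m := fun c => ∫ ω, g c (Z ω) ∂μ
  have hint : ∀ c, Integrable (fun ω => g c (Z ω)) μ := fun c =>
    .of_bound ((hmeas c).comp_aemeasurable hZ).aestronglyMeasurable (max |a| |b|)
      (.of_forall fun ω => abs_le_max_abs_abs (ha c _) (hb c _))
  obtain ⟨c₀, hm₀, hc₀⟩ : ∃ c₀, m c₀ ≤ a + ε ∧ 0 < c₀ :=
    ((h0.eventually (eventually_le_nhds (lt_add_of_pos_right a hε))).and
      eventually_mem_nhdsWithin).exists
  obtain ⟨c₁, hm₁, hc₀₁⟩ : ∃ c₁, b - ε ≤ m c₁ ∧ c₀ ≤ c₁ :=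
    ((htop.eventually (eventually_ge_nhds (sub_lt_self b hε))).and
      (eventually_ge_atTop c₀)).exists
  obtain ⟨T, hT, hcover⟩ := exists_finset_Ioo_cover_Icc hcont hε hc₀ (c₁ := c₁)
  refine ⟨insert (fun _ => a, g c₀) (insert (g c₁, fun _ => b)
    (T.image fun p => (g p.1, g p.2))), ?_, fun ⟨c, hc⟩ => ?_⟩
  · simp only [Finset.forall_mem_insert, Finset.forall_mem_image]
    exact ⟨⟨measurable_const, hmeas c₀, integrable_const a, hint c₀⟩,
      ⟨hmeas c₁, measurable_const, hint c₁, integrable_const b⟩,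
      fun _ _ => ⟨hmeas _, hmeas _, hint _, hint _⟩⟩
  rcases le_total c c₀ with hcc₀ | hc₀c
  · refine ⟨_, Finset.mem_insert_self _ _, fun y => ha c y, fun y => hmono y hc hc₀ hcc₀, ?_⟩
    show m c₀ - ∫ _, a ∂μ ≤ ε
    rw [integral_const, probReal_univ, one_smul]
    linarith
  rcases le_total c₁ c with hc₁c | hcc₁
  · refine ⟨_, Finset.mem_insert_of_mem (Finset.mem_insert_self _ _),
      fun y => hmono y (hc₀.trans_le hc₀₁) hc hc₁c, fun y => hb c y, ?_⟩
    show ∫ _, b ∂μ - m c₁ ≤ ε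
    rw [integral_const, probReal_univ, one_smul]
    linarith
  obtain ⟨p, hpT, hcp⟩ := mem_iUnion₂.1 (hcover ⟨hc₀c, hcc₁⟩)
  exact ⟨_, Finset.mem_insert_of_mem (Finset.mem_insert_of_mem (Finset.mem_image_of_mem _ hpT)),
    fun y => hmono y (hT p hpT).1 hc hcp.1.le, fun y => hmono y hc (hc.trans hcp.2) hcp.2.le,
    (hT p hpT).2⟩

end Bracketing

theorem tendsto_iSup_abs_sub_of_tendstoUniformly {β ι : Type*} {p : Filter β} {F : β → ι → ℝ}
    {f : ι → ℝ} (h : TendstoUniformly F f p) :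
    Tendsto (fun n => ⨆ c, |F n c - f c|) p (𝓝 0) := by
  refine Metric.tendsto_nhds.2 fun ε hε => ?_
  filter_upwards [Metric.tendstoUniformly_iff.1 h (ε / 2) (half_pos hε)] with n hn
  have hle : ⨆ c, |F n c - f c| ≤ ε / 2 :=
    Real.iSup_le (fun c => by rw [abs_sub_comm, ← Real.dist_eq]; exact (hn c).le) (by positivity)
  rw [Real.dist_eq, sub_zero, abs_of_nonneg (Real.iSup_nonneg fun c => abs_nonneg _)]
  linarith

theorem cdf_map_eq {Ω : Type*} [MeasurableSpace Ω] {μ : Measure Ω} [IsProbabilityMeasure μ]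
    {Y : Ω → ℝ} (hY : Measurable Y) (x : ℝ) : cdf (μ.map Y) x = (μ {ω | Y ω ≤ x}).toReal := by
  have := Measure.isProbabilityMeasure_map (μ := μ) hY.aemeasurable
  rw [cdf_eq_real, measureReal_def, Measure.map_apply hY measurableSet_Iic]
  rfl

theorem map_Iic_zero_eq_zero_of_pos {Ω : Type*} [MeasurableSpace Ω] {μ : Measure Ω} {Y : Ω → ℝ}
    (hY : Measurable Y) (hpos : ∀ ω, 0 < Y ω) : μ.map Y (Iic 0) = 0 := by
  rw [Measure.map_apply hY measurableSet_Iic]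
  convert measure_empty (μ := μ)
  exact eq_empty_of_forall_notMem fun ω hω => (hpos ω).not_ge hω

theorem cdf_eq_zero_of_nonpos {ν : Measure ℝ} [IsProbabilityMeasure ν] (hν : ν (Iic 0) = 0)
    {x : ℝ} (hx : x ≤ 0) : cdf ν x = 0 := by
  rw [cdf_eq_real, measureReal_def, measure_mono_null (Iic_subset_Iic.2 hx) hν,
    ENNReal.toReal_zero]

noncomputable def rfaDiff (F₁ F₂ : ℝ → ℝ) (c : ℝ) (y : ℝ × ℝ) : ℝ := F₂ (c * y.1) - F₁ (y.2 / c)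

section RfaDiff

variable {F₁ F₂ : ℝ → ℝ}

theorem continuous_rfaDiff (hF₁ : Continuous F₁) (hF₂ : Continuous F₂) (c : ℝ) :
    Continuous (rfaDiff F₁ F₂ c) := by
  unfold rfaDiff; fun_prop

theorem continuousAt_rfaDiff (hF₁ : Continuous F₁) (hF₂ : Continuous F₂) (y : ℝ × ℝ) {c : ℝ}
    (hc : c ≠ 0) : ContinuousAt (rfaDiff F₁ F₂ · y) c := by
  unfold rfaDiff; fun_prop (disch := exact hc)

theorem tendsto_rfaDiff_nhdsGT_zero (hF₁ : Tendsto F₁ atTop (𝓝 1)) (hF₂ : ContinuousAt F₂ 0)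
    (hF₂0 : F₂ 0 = 0) {y : ℝ × ℝ} (hy : 0 < y.2) :
    Tendsto (rfaDiff F₁ F₂ · y) (𝓝[>] 0) (𝓝 (-1)) := by
  have h₂ : Tendsto (fun c => F₂ (c * y.1)) (𝓝[>] 0) (𝓝 0) := by
    have := hF₂.tendsto.comp ((continuous_mul_const y.1).tendsto' 0 0 (zero_mul _))
    rw [hF₂0] at this
    exact this.mono_left nhdsWithin_le_nhds
  have h₁ : Tendsto (fun c => F₁ (y.2 / c)) (𝓝[>] 0) (𝓝 1) :=
    hF₁.comp (tendsto_inv_nhdsGT_zero.const_mul_atTop hy)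
  simpa [rfaDiff] using h₂.sub h₁

theorem tendsto_rfaDiff_atTop (hF₁ : ContinuousAt F₁ 0) (hF₁0 : F₁ 0 = 0)
    (hF₂ : Tendsto F₂ atTop (𝓝 1)) {y : ℝ × ℝ} (hy : 0 < y.1) :
    Tendsto (rfaDiff F₁ F₂ · y) atTop (𝓝 1) := by
  have h₂ : Tendsto (fun c => F₂ (c * y.1)) atTop (𝓝 1) :=
    hF₂.comp (tendsto_id.atTop_mul_const hy)
  have h₁ : Tendsto (fun c => F₁ (y.2 / c)) atTop (𝓝 0) :=
    hF₁0 ▸ hF₁.tendsto.comp (tendsto_const_nhds.div_atTop tendsto_id)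
  simpa [rfaDiff] using h₂.sub h₁

end RfaDiff

section RfaDiffCdf

variable {ν₁ ν₂ : Measure ℝ}

theorem rfaDiff_cdf_mem_Icc (c : ℝ) (y : ℝ × ℝ) :
    rfaDiff (cdf ν₁) (cdf ν₂) c y ∈ Icc (-1) 1 := by
  unfold rfaDiff
  constructor <;> linarith [cdf_nonneg ν₁ (y.2 / c), cdf_le_one ν₁ (y.2 / c),
    cdf_nonneg ν₂ (c * y.1), cdf_le_one ν₂ (c * y.1)]

theorem integrable_rfaDiff_cdf {Ω : Type*} [MeasurableSpace Ω] {μ : Measure Ω}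
    [IsFiniteMeasure μ] {Z : Ω → ℝ × ℝ} (hZ : AEMeasurable Z μ) (hc₁ : Continuous (cdf ν₁))
    (hc₂ : Continuous (cdf ν₂)) (c : ℝ) :
    Integrable (fun ω => rfaDiff (cdf ν₁) (cdf ν₂) c (Z ω)) μ :=
  .of_bound ((continuous_rfaDiff hc₁ hc₂ c).comp_aestronglyMeasurable hZ.aestronglyMeasurable) 1
    (.of_forall fun ω => abs_le.2 (rfaDiff_cdf_mem_Icc c (Z ω)))

variable [IsProbabilityMeasure ν₁] [IsProbabilityMeasure ν₂]

theorem monotoneOn_rfaDiff_cdf (h₁ : ν₁ (Iic 0) = 0) (h₂ : ν₂ (Iic 0) = 0) (y : ℝ × ℝ) :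
    MonotoneOn (rfaDiff (cdf ν₁) (cdf ν₂) · y) (Ioi 0) := by
  intro c hc d hd hcd
  have h₂le : cdf ν₂ (c * y.1) ≤ cdf ν₂ (d * y.1) := by
    rcases le_total 0 y.1 with hy | hy
    · exact monotone_cdf ν₂ (mul_le_mul_of_nonneg_right hcd hy)
    · rw [cdf_eq_zero_of_nonpos h₂ (mul_nonpos_of_nonneg_of_nonpos hc.le hy),
        cdf_eq_zero_of_nonpos h₂ (mul_nonpos_of_nonneg_of_nonpos hd.le hy)]
  have h₁le : cdf ν₁ (y.2 / d) ≤ cdf ν₁ (y.2 / c) := by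
    rcases le_total 0 y.2 with hy | hy
    · exact monotone_cdf ν₁ (div_le_div_of_nonneg_left hy hc hcd)
    · rw [cdf_eq_zero_of_nonpos h₁ (div_nonpos_of_nonpos_of_nonneg hy hd.le),
        cdf_eq_zero_of_nonpos h₁ (div_nonpos_of_nonpos_of_nonneg hy hc.le)]
  exact sub_le_sub h₂le h₁le

end RfaDiffCdf

theorem hasFiniteBrackets_rfaDiff_cdf {Ω : Type*} [MeasurableSpace Ω] {μ : Measure Ω}
    [IsProbabilityMeasure μ] {ν₁ ν₂ : Measure ℝ} [IsProbabilityMeasure ν₁]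
    [IsProbabilityMeasure ν₂] {Z : Ω → ℝ × ℝ} (hZ : AEMeasurable Z μ)
    (hZpos : ∀ᵐ ω ∂μ, 0 < (Z ω).1 ∧ 0 < (Z ω).2) (h₁ : ν₁ (Iic 0) = 0) (h₂ : ν₂ (Iic 0) = 0)
    (hc₁ : Continuous (cdf ν₁)) (hc₂ : Continuous (cdf ν₂)) {ε : ℝ} (hε : 0 < ε) :
    HasFiniteBrackets Z μ (fun c : {c : ℝ // 0 < c} => rfaDiff (cdf ν₁) (cdf ν₂) c) ε := by
  have hmeas : ∀ c, AEStronglyMeasurable (fun ω => rfaDiff (cdf ν₁) (cdf ν₂) c (Z ω)) μ :=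
    fun c => (integrable_rfaDiff_cdf hZ hc₁ hc₂ c).aestronglyMeasurable
  have hbound : ∀ c ω, ‖rfaDiff (cdf ν₁) (cdf ν₂) c (Z ω)‖ ≤ 1 :=
    fun c ω => abs_le.2 (rfaDiff_cdf_mem_Icc c (Z ω))
  refine hasFiniteBrackets_of_monotoneOn hZ hε
    (fun c => (continuous_rfaDiff hc₁ hc₂ c).measurable) (fun c y => (rfaDiff_cdf_mem_Icc c y).1)
    (fun c y => (rfaDiff_cdf_mem_Icc c y).2) (monotoneOn_rfaDiff_cdf h₁ h₂) ?_ ?_ ?_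
  · exact continuousOn_of_dominated (fun c _ => hmeas c) (fun c _ => .of_forall (hbound c))
      (integrable_const 1) (.of_forall fun ω c hc =>
        (continuousAt_rfaDiff hc₁ hc₂ (Z ω) (ne_of_gt hc)).continuousWithinAt)
  · simpa using tendsto_integral_filter_of_norm_le_const (.of_forall hmeas)
      ⟨1, .of_forall fun c => .of_forall (hbound c)⟩ (hZpos.mono fun ω hω =>
        tendsto_rfaDiff_nhdsGT_zero (tendsto_cdf_atTop ν₁) hc₂.continuousAt
          (cdf_eq_zero_of_nonpos h₂ le_rfl) hω.2)
  · simpa using tendsto_integral_filter_of_norm_le_const (.of_forall hmeas)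
      ⟨1, .of_forall fun c => .of_forall (hbound c)⟩ (hZpos.mono fun ω hω =>
        tendsto_rfaDiff_atTop hc₁.continuousAt (cdf_eq_zero_of_nonpos h₁ le_rfl)
          (tendsto_cdf_atTop ν₂) hω.1)

theorem rfa_madogram_estimator_uniform_strong_consistency_general
    {Ω : Type*} [MeasurableSpace Ω] (μ : Measure Ω) [IsProbabilityMeasure μ]
    (Y1 Y2 : Ω → ℝ) (hY1meas : Measurable Y1) (hY2meas : Measurable Y2)
    (hY1pos : ∀ ω, 0 < Y1 ω) (hY2pos : ∀ ω, 0 < Y2 ω)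
    (F1 F2 : ℝ → ℝ)
    (hF1 : ∀ x, F1 x = (μ {ω | Y1 ω ≤ x}).toReal)
    (hF2 : ∀ x, F2 x = (μ {ω | Y2 ω ≤ x}).toReal)
    (hF1cont : Continuous F1) (hF2cont : Continuous F2)
    (Y : ℕ → Ω → ℝ × ℝ)
    (hindep : iIndepFun Y μ)
    (hident : ∀ i, IdentDistrib (Y i) (fun ω => (Y1 ω, Y2 ω)) μ μ) :
    ∀ᵐ ω ∂μ, Tendsto
      (fun n : ℕ => ⨆ c : {c : ℝ // 0 < c},
        |(1 / (2 * (n : ℝ))) *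
            ∑ i ∈ Finset.range n, |F2 (c.1 * (Y i ω).1) - F1 ((Y i ω).2 / c.1)|
          - (1 / 2) * ∫ ω', |F2 (c.1 * Y1 ω') - F1 (Y2 ω' / c.1)| ∂μ|)
      atTop (nhds 0) := by
  obtain rfl : F1 = cdf (μ.map Y1) := funext fun x => (hF1 x).trans (cdf_map_eq hY1meas x).symm
  obtain rfl : F2 = cdf (μ.map Y2) := funext fun x => (hF2 x).trans (cdf_map_eq hY2meas x).symm
  have := Measure.isProbabilityMeasure_map (μ := μ) hY1meas.aemeasurable
  have := Measure.isProbabilityMeasure_map (μ := μ) hY2meas.aemeasurable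
  have hZ : AEMeasurable (fun ω => (Y1 ω, Y2 ω)) μ := (hY1meas.prodMk hY2meas).aemeasurable
  have hunif := ae_tendstoUniformly_empiricalMean_of_hasFiniteBrackets
    (fun i j hij => hindep.indepFun hij) hident
    (fun c => (integrable_rfaDiff_cdf hZ hF1cont hF2cont c.1).abs)
    fun ε hε => (hasFiniteBrackets_rfaDiff_cdf hZ (.of_forall fun ω => ⟨hY1pos ω, hY2pos ω⟩)
      (map_Iic_zero_eq_zero_of_pos hY1meas hY1pos) (map_Iic_zero_eq_zero_of_pos hY2meas hY2pos)
      hF1cont hF2cont hε).abs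
  filter_upwards [hunif] with ω hω
  refine (tendsto_iSup_abs_sub_of_tendstoUniformly
    ((Real.uniformContinuous_const_mul (x := 1 / 2)).comp_tendstoUniformly hω)).congr fun n => ?_
  congr 1 with c
  simp only [Function.comp_apply, empiricalMean, Pi.abs_apply, rfaDiff]
  congr 2
  ring

/-- For an i.i.d. sample `(Y_{1,i}, Y_{2,i})` of copies of `(Y1, Y2)` with
continuous margins `F1`, `F2` (strictly increasing on `(0,∞)`, vanishing at `0`), the
estimator `D_n(c) = (1/(2n)) Σᵢ |F2(c·Y_{1,i}) − F1(Y_{2,i}/c)|` of the RFA-madogram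
satisfies `sup_{c>0} |D_n(c) − D(c)| → 0` almost surely. -/
theorem rfa_madogram_estimator_uniform_strong_consistency
    {Ω : Type*} [MeasurableSpace Ω] (μ : Measure Ω) [IsProbabilityMeasure μ]
    (Y1 Y2 : Ω → ℝ) (hY1meas : Measurable Y1) (hY2meas : Measurable Y2)
    (hY1pos : ∀ ω, 0 < Y1 ω) (hY2pos : ∀ ω, 0 < Y2 ω)
    (F1 F2 : ℝ → ℝ)
    (hF1 : ∀ x, F1 x = (μ {ω | Y1 ω ≤ x}).toReal)
    (hF2 : ∀ x, F2 x = (μ {ω | Y2 ω ≤ x}).toReal)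
    (hF1cont : Continuous F1) (hF2cont : Continuous F2)
    (hF1mono : StrictMonoOn F1 (Set.Ioi 0)) (hF2mono : StrictMonoOn F2 (Set.Ioi 0))
    (hF10 : F1 0 = 0) (hF20 : F2 0 = 0)
    (Y : ℕ → Ω → ℝ × ℝ) (hYmeas : ∀ i, Measurable (Y i))
    (hindep : iIndepFun Y μ)
    (hident : ∀ i, IdentDistrib (Y i) (fun ω => (Y1 ω, Y2 ω)) μ μ) :
    ∀ᵐ ω ∂μ, Tendsto
      (fun n : ℕ => ⨆ c : {c : ℝ // 0 < c},
        |(1 / (2 * (n : ℝ))) *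
            ∑ i ∈ Finset.range n, |F2 (c.1 * (Y i ω).1) - F1 ((Y i ω).2 / c.1)|
          - (1 / 2) * ∫ ω', |F2 (c.1 * Y1 ω') - F1 (Y2 ω' / c.1)| ∂μ|)
      atTop (nhds 0) :=
  rfa_madogram_estimator_uniform_strong_consistency_general μ Y1 Y2 hY1meas hY2meas hY1pos hY2pos F1
    F2 hF1 hF2 hF1cont hF2cont Y hindep hident
end

section
/- Let σ1, σ2, ξ, c > 0 and let V : (0,∞)² → (0,∞) be homogeneous of order −1, i.e. V(t·z1, t·z2) = t^{−1}·V(z1, z2) for all t, z1, z2 > 0. Let (Z1, Z2) be a pair of positive random variables with joint cumulative distribution function exp(−V(z1, z2)) for z1, z2 > 0, and set Y1 = σ1·Z1^{ξ}, Y2 = σ2·Z2^{ξ}, with marginal distribution functions F_i(x) = exp(−(x/σ_i)^{−1/ξ}) for x > 0. Put a12 = (c·σ1/σ2)^{−1/ξ} and a21 = 1/a12. Then for every u ∈ (0,1), P( max(F2(c·Y1), F1(Y2/c)) ≤ u ) = u^{θ_c}, where θ_c = V(a12, a21). -/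
open MeasureTheory

/-- In the homogeneous case `ξ1 = ξ2 = ξ`, with `V` homogeneous of order
`−1`, `a12 = (c·σ1/σ2)^{−1/ξ}`, `a21 = 1/a12` and `θ_c = V(a12, a21)`, for every
`u ∈ (0,1)`: `P(max(F2(c·Y1), F1(Y2/c)) ≤ u) = u^{θ_c}`. -/
theorem max_rescaled_cdf_law_homogeneous
    {Ω : Type*} [MeasurableSpace Ω] (μ : Measure Ω) [IsProbabilityMeasure μ]
    (σ1 σ2 ξ c : ℝ) (hσ1 : 0 < σ1) (hσ2 : 0 < σ2) (hξ : 0 < ξ) (hc : 0 < c)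
    (V : ℝ → ℝ → ℝ) (hVpos : ∀ z1 > (0 : ℝ), ∀ z2 > (0 : ℝ), 0 < V z1 z2)
    (hVhom : ∀ t > (0 : ℝ), ∀ z1 > (0 : ℝ), ∀ z2 > (0 : ℝ),
      V (t * z1) (t * z2) = t⁻¹ * V z1 z2)
    (Z1 Z2 : Ω → ℝ) (hZ1meas : Measurable Z1) (hZ2meas : Measurable Z2)
    (hZ1pos : ∀ ω, 0 < Z1 ω) (hZ2pos : ∀ ω, 0 < Z2 ω)
    (hjoint : ∀ z1 > (0 : ℝ), ∀ z2 > (0 : ℝ),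
      (μ {ω | Z1 ω ≤ z1 ∧ Z2 ω ≤ z2}).toReal = Real.exp (-V z1 z2))
    (F1 F2 : ℝ → ℝ)
    (hF1 : ∀ x > (0 : ℝ), F1 x = Real.exp (-(x / σ1) ^ (-(1 / ξ))))
    (hF2 : ∀ x > (0 : ℝ), F2 x = Real.exp (-(x / σ2) ^ (-(1 / ξ)))) :
    ∀ u ∈ Set.Ioo (0 : ℝ) 1,
      (μ {ω | max (F2 (c * (σ1 * Z1 ω ^ ξ))) (F1 ((σ2 * Z2 ω ^ ξ) / c)) ≤ u}).toReal
        = u ^ (V ((c * σ1 / σ2) ^ (-(1 / ξ))) (((c * σ1 / σ2) ^ (-(1 / ξ)))⁻¹)) := by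
  intro u hu
  obtain ⟨hu0, hu1⟩ := hu
  set a : ℝ := (c * σ1 / σ2) ^ (-(1 / ξ)) with ha
  have hbase : (0 : ℝ) < c * σ1 / σ2 := by positivity
  have hapos : 0 < a := Real.rpow_pos_of_pos hbase _
  set s : ℝ := -Real.log u with hs
  have hspos : 0 < s := by
    have : Real.log u < 0 := Real.log_neg hu0 hu1
    simp only [hs]; linarith
  have hξne : ξ ≠ 0 := ne_of_gt hξ
  have hexp : ξ * (-(1 / ξ)) = -1 := by field_simp
  -- pointwise rewriting of F2(c Y1)
  have key1 : ∀ ω, F2 (c * (σ1 * Z1 ω ^ ξ)) = Real.exp (-(a / Z1 ω)) := by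
    intro ω
    have hz := hZ1pos ω
    rw [hF2 _ (by positivity)]
    congr 1
    have h1 : c * (σ1 * Z1 ω ^ ξ) / σ2 = (c * σ1 / σ2) * Z1 ω ^ ξ := by ring
    rw [h1, Real.mul_rpow hbase.le (Real.rpow_nonneg hz.le _),
      ← Real.rpow_mul hz.le, hexp, Real.rpow_neg_one]
    ring
  -- pointwise rewriting of F1(Y2 / c)
  have key2 : ∀ ω, F1 (σ2 * Z2 ω ^ ξ / c) = Real.exp (-(a⁻¹ / Z2 ω)) := by
    intro ω
    have hz := hZ2pos ω
    rw [hF1 _ (by positivity)]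
    congr 1
    have h1 : σ2 * Z2 ω ^ ξ / c / σ1 = (c * σ1 / σ2)⁻¹ * Z2 ω ^ ξ := by
      field_simp
    rw [h1, Real.mul_rpow (by positivity) (Real.rpow_nonneg hz.le _),
      ← Real.rpow_mul hz.le, hexp, Real.rpow_neg_one,
      Real.inv_rpow hbase.le]
    ring
  -- event equality
  have hset : {ω | max (F2 (c * (σ1 * Z1 ω ^ ξ))) (F1 ((σ2 * Z2 ω ^ ξ) / c)) ≤ u}
      = {ω | Z1 ω ≤ a / s ∧ Z2 ω ≤ a⁻¹ / s} := by
    ext ω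
    have hz1 := hZ1pos ω
    have hz2 := hZ2pos ω
    simp only [Set.mem_setOf_eq, max_le_iff, key1, key2]
    have step : ∀ b z : ℝ, 0 < b → 0 < z →
        (Real.exp (-(b / z)) ≤ u ↔ z ≤ b / s) := by
      intro b z hb hz
      rw [← Real.exp_log hu0, Real.exp_le_exp, neg_le, ← hs,
        le_div_iff₀ hz, le_div_iff₀ hspos]
      constructor <;> intro h <;> nlinarith
    rw [step a (Z1 ω) hapos hz1, step a⁻¹ (Z2 ω) (inv_pos.mpr hapos) hz2]
  rw [hset, hjoint _ (by positivity) _ (by positivity)]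
  have h1 : a / s = s⁻¹ * a := by rw [div_eq_inv_mul]
  have h2 : a⁻¹ / s = s⁻¹ * a⁻¹ := by rw [div_eq_inv_mul]
  rw [h1, h2, hVhom s⁻¹ (inv_pos.mpr hspos) a hapos a⁻¹ (inv_pos.mpr hapos),
    inv_inv, Real.rpow_def_of_pos hu0]
  congr 1
  have : Real.log u = -s := by simp [hs]
  rw [this]; ring
end

section
/- Let σ1, σ2, ξ, c > 0 and let V : (0,∞)² → (0,∞) be homogeneous of order −1. Let (Z1, Z2) be a pair of positive random variables with joint cumulative distribution function exp(−V(z1, z2)) for z1, z2 > 0, whose margins are both unit Fréchet (P(Z_i ≤ z) = exp(−1/z) for z > 0). Set Y1 = σ1·Z1^{ξ}, Y2 = σ2·Z2^{ξ}, with marginal distribution functions F_i(x) = exp(−(x/σ_i)^{−1/ξ}) for x > 0, and put a12 = (c·σ1/σ2)^{−1/ξ}, a21 = 1/a12, θ_c = V(a12, a21). Then the RFA-madogram satisfies D(c, Y1, Y2) = θ_c/(θ_c + 1) − 1/(2·(1 + a12)) − 1/(2·(1 + a21)). -/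
/-! With `a = (c σ₁ / σ₂) ^ (-1 / ξ)`, the two arguments of the madogram are `W₁ = exp (-a / Z₁)`
and `W₂ = exp (-a⁻¹ / Z₂)`, and `|W₁ - W₂| = 2 max W₁ W₂ - W₁ - W₂`. Each of `W₁`, `W₂` and
`max W₁ W₂` takes values in `[0, 1]` with distribution function `u ↦ u ^ β` on `(0, 1)`, where
`β = a⁻¹`, `a` and `θ_c` respectively (by the unit Fréchet margins, and for the maximum by the joint
law together with the homogeneity of `V`); such a variable has mean `β / (β + 1)`. -/

open MeasureTheory Set

theorem rpow_neg_inv_mul_rpow {k z ξ : ℝ} (hk : 0 ≤ k) (hz : 0 < z) (hξ : ξ ≠ 0) :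
    (k * z ^ ξ) ^ (-(1 / ξ)) = k ^ (-(1 / ξ)) / z := by
  rw [Real.mul_rpow hk (Real.rpow_nonneg hz.le _), ← Real.rpow_mul hz.le, mul_neg,
    mul_one_div_cancel hξ, Real.rpow_neg_one]
  exact (div_eq_mul_inv _ _).symm

theorem abs_sub_eq_two_mul_max_sub_sub (x y : ℝ) : |x - y| = 2 * max x y - x - y := by
  rw [← max_sub_min_eq_abs']
  linarith [min_add_max x y]

theorem exp_neg_div_mem_Icc {b z : ℝ} (hb : 0 ≤ b) (hz : 0 ≤ z) :
    Real.exp (-(b / z)) ∈ Icc (0 : ℝ) 1 :=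
  ⟨(Real.exp_pos _).le, Real.exp_le_one_iff.mpr (neg_nonpos.mpr (div_nonneg hb hz))⟩

theorem exp_neg_div_le_iff {b z u : ℝ} (hz : 0 < z) (hu : u ∈ Ioo (0 : ℝ) 1) :
    Real.exp (-(b / z)) ≤ u ↔ z ≤ b / -Real.log u := by
  have hL : 0 < -Real.log u := neg_pos.mpr (Real.log_neg hu.1 hu.2)
  rw [← Real.le_log_iff_exp_le hu.1, neg_le, le_div_iff₀ hz, le_div_iff₀ hL, mul_comm]

theorem integrable_exp_neg_div {Ω : Type*} [MeasurableSpace Ω] {μ : Measure Ω}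
    [IsFiniteMeasure μ] {Z : Ω → ℝ} (hZ : Measurable Z) (hZ₀ : ∀ ω, 0 ≤ Z ω) {b : ℝ}
    (hb : 0 ≤ b) : Integrable (fun ω => Real.exp (-(b / Z ω))) μ :=
  .of_mem_Icc 0 1 (by fun_prop) (.of_forall fun ω => exp_neg_div_mem_Icc hb (hZ₀ ω))

section

variable {Ω : Type*} [MeasurableSpace Ω] {μ : Measure Ω} [IsProbabilityMeasure μ]

theorem nonneg_of_measureReal_le_eq_rpow {X : Ω → ℝ} {β : ℝ}
    (hcdf : ∀ u ∈ Ioo (0 : ℝ) 1, μ.real {ω | X ω ≤ u} = u ^ β) : 0 ≤ β := by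
  by_contra! hβ
  have h_gt : 1 < (1 / 2 : ℝ) ^ β :=
    Real.one_lt_rpow_of_pos_of_lt_one_of_neg (by norm_num) (by norm_num) hβ
  have h_le : μ.real {ω | X ω ≤ 1 / 2} ≤ 1 := measureReal_le_one
  rw [hcdf _ ⟨by norm_num, by norm_num⟩] at h_le
  linarith

theorem integral_eq_div_of_measureReal_le_eq_rpow {X : Ω → ℝ} (hX : Measurable X)
    (hX01 : ∀ ω, X ω ∈ Icc (0 : ℝ) 1) {β : ℝ}
    (hcdf : ∀ u ∈ Ioo (0 : ℝ) 1, μ.real {ω | X ω ≤ u} = u ^ β) :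
    ∫ ω, X ω ∂μ = β / (β + 1) := by
  have hβ := nonneg_of_measureReal_le_eq_rpow hcdf
  have htail : ∀ t ∈ Ioo (0 : ℝ) 1, μ.real {ω | t < X ω} = 1 - t ^ β := fun t ht => by
    rw [← hcdf t ht, ← probReal_compl_eq_one_sub (s := {ω | X ω ≤ t}) (hX measurableSet_Iic),
      compl_ofPred]
    simp only [not_le]
  have hvanish : ∀ t ∈ Ioi (0 : ℝ) \ Ioo 0 1, μ.real {ω | t < X ω} = 0 := by
    rintro t ⟨ht0, ht1⟩
    have h1t : 1 ≤ t := by_contra fun h => ht1 ⟨ht0, not_le.mp h⟩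
    have hempty : {ω | t < X ω} = ∅ :=
      eq_empty_of_forall_notMem fun ω hω => (hX01 ω).2.not_gt (h1t.trans_lt hω)
    rw [hempty, measureReal_empty]
  calc ∫ ω, X ω ∂μ = ∫ t in Ioi 0, μ.real {ω | t < X ω} :=
        (Integrable.of_mem_Icc 0 1 hX.aemeasurable (.of_forall hX01)).integral_eq_integral_meas_lt
          (.of_forall fun ω => (hX01 ω).1)
    _ = ∫ t in Ioo 0 1, μ.real {ω | t < X ω} :=
        setIntegral_eq_of_subset_of_ae_sdiff_eq_zero measurableSet_Ioi.nullMeasurableSet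
          Ioo_subset_Ioi_self (.of_forall hvanish)
    _ = ∫ t in (0 : ℝ)..1, (1 - t ^ β) := by
        rw [intervalIntegral.integral_of_le zero_le_one, integral_Ioc_eq_integral_Ioo]
        exact setIntegral_congr_fun measurableSet_Ioo htail
    _ = β / (β + 1) := by
        rw [intervalIntegral.integral_sub intervalIntegrable_const
            (intervalIntegral.intervalIntegrable_rpow (Or.inl hβ)),
          intervalIntegral.integral_const, integral_rpow (Or.inl (by linarith)),
          Real.one_rpow, Real.zero_rpow (by linarith)]
        field_simp
        ring

variable {Z Z₁ Z₂ : Ω → ℝ}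

theorem integral_exp_neg_div_of_unitFrechet (hZ : Measurable Z) (hZpos : ∀ ω, 0 < Z ω)
    (hcdf : ∀ z > (0 : ℝ), μ.real {ω | Z ω ≤ z} = Real.exp (-1 / z)) {b : ℝ} (hb : 0 < b) :
    ∫ ω, Real.exp (-(b / Z ω)) ∂μ = 1 / (1 + b) := by
  have hcdf_b : ∀ u ∈ Ioo (0 : ℝ) 1, μ.real {ω | Real.exp (-(b / Z ω)) ≤ u} = u ^ b⁻¹ := by
    intro u hu
    have hL : 0 < -Real.log u := neg_pos.mpr (Real.log_neg hu.1 hu.2)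
    simp_rw [exp_neg_div_le_iff (hZpos _) hu]
    rw [hcdf _ (by positivity), Real.rpow_def_of_pos hu.1]
    congr 1
    field_simp
  rw [integral_eq_div_of_measureReal_le_eq_rpow (by fun_prop)
    (fun ω => exp_neg_div_mem_Icc hb.le (hZpos ω).le) hcdf_b]
  field_simp

theorem integral_max_exp_neg_div_of_maxStable
    (hZ₁ : Measurable Z₁) (hZ₂ : Measurable Z₂) (hZ₁pos : ∀ ω, 0 < Z₁ ω)
    (hZ₂pos : ∀ ω, 0 < Z₂ ω) {V : ℝ → ℝ → ℝ}
    (hVhom : ∀ t > (0 : ℝ), ∀ z₁ > (0 : ℝ), ∀ z₂ > (0 : ℝ), V (t * z₁) (t * z₂) = t⁻¹ * V z₁ z₂)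
    (hjoint : ∀ z₁ > (0 : ℝ), ∀ z₂ > (0 : ℝ),
      μ.real {ω | Z₁ ω ≤ z₁ ∧ Z₂ ω ≤ z₂} = Real.exp (-V z₁ z₂))
    {b₁ b₂ : ℝ} (hb₁ : 0 < b₁) (hb₂ : 0 < b₂) :
    ∫ ω, max (Real.exp (-(b₁ / Z₁ ω))) (Real.exp (-(b₂ / Z₂ ω))) ∂μ
      = V b₁ b₂ / (V b₁ b₂ + 1) := by
  have hcdf : ∀ u ∈ Ioo (0 : ℝ) 1, μ.real {ω | max (Real.exp (-(b₁ / Z₁ ω)))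
      (Real.exp (-(b₂ / Z₂ ω))) ≤ u} = u ^ V b₁ b₂ := by
    intro u hu
    have hL : 0 < -Real.log u := neg_pos.mpr (Real.log_neg hu.1 hu.2)
    simp_rw [max_le_iff, exp_neg_div_le_iff (hZ₁pos _) hu, exp_neg_div_le_iff (hZ₂pos _) hu]
    -- with `L = -log u`, homogeneity turns `V (b₁ / L) (b₂ / L)` into `L * V b₁ b₂`
    rw [hjoint _ (by positivity) _ (by positivity), div_eq_inv_mul, div_eq_inv_mul,
      hVhom _ (inv_pos.mpr hL) _ hb₁ _ hb₂, inv_inv, Real.rpow_def_of_pos hu.1]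
    ring_nf
  refine integral_eq_div_of_measureReal_le_eq_rpow (by fun_prop) (fun ω => ?_) hcdf
  have h₁ := exp_neg_div_mem_Icc hb₁.le (hZ₁pos ω).le
  have h₂ := exp_neg_div_mem_Icc hb₂.le (hZ₂pos ω).le
  exact ⟨le_max_of_le_left h₁.1, max_le h₁.2 h₂.2⟩

end

theorem rfa_madogram_formula_homogeneous_GEV_general
    {Ω : Type*} [MeasurableSpace Ω] (μ : Measure Ω) [IsProbabilityMeasure μ]
    (σ1 σ2 ξ c : ℝ) (hσ1 : 0 < σ1) (hσ2 : 0 < σ2) (hξ : 0 < ξ) (hc : 0 < c)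
    (V : ℝ → ℝ → ℝ)
    (hVhom : ∀ t > (0 : ℝ), ∀ z1 > (0 : ℝ), ∀ z2 > (0 : ℝ),
      V (t * z1) (t * z2) = t⁻¹ * V z1 z2)
    (Z1 Z2 : Ω → ℝ) (hZ1meas : Measurable Z1) (hZ2meas : Measurable Z2)
    (hZ1pos : ∀ ω, 0 < Z1 ω) (hZ2pos : ∀ ω, 0 < Z2 ω)
    (hjoint : ∀ z1 > (0 : ℝ), ∀ z2 > (0 : ℝ),
      (μ {ω | Z1 ω ≤ z1 ∧ Z2 ω ≤ z2}).toReal = Real.exp (-V z1 z2))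
    (hZ1cdf : ∀ z > (0 : ℝ), (μ {ω | Z1 ω ≤ z}).toReal = Real.exp (-1 / z))
    (hZ2cdf : ∀ z > (0 : ℝ), (μ {ω | Z2 ω ≤ z}).toReal = Real.exp (-1 / z))
    (F1 F2 : ℝ → ℝ)
    (hF1 : ∀ x > (0 : ℝ), F1 x = Real.exp (-(x / σ1) ^ (-(1 / ξ))))
    (hF2 : ∀ x > (0 : ℝ), F2 x = Real.exp (-(x / σ2) ^ (-(1 / ξ)))) :
    (1 / 2) * ∫ ω, |F2 (c * (σ1 * Z1 ω ^ ξ)) - F1 ((σ2 * Z2 ω ^ ξ) / c)| ∂μ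
      = V ((c * σ1 / σ2) ^ (-(1 / ξ))) (((c * σ1 / σ2) ^ (-(1 / ξ)))⁻¹)
          / (V ((c * σ1 / σ2) ^ (-(1 / ξ))) (((c * σ1 / σ2) ^ (-(1 / ξ)))⁻¹) + 1)
        - 1 / (2 * (1 + (c * σ1 / σ2) ^ (-(1 / ξ))))
        - 1 / (2 * (1 + ((c * σ1 / σ2) ^ (-(1 / ξ)))⁻¹)) := by
  have hk : 0 < c * σ1 / σ2 := by positivity
  set a := (c * σ1 / σ2) ^ (-(1 / ξ))
  have ha : 0 < a := Real.rpow_pos_of_pos hk _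
  set W1 : Ω → ℝ := fun ω => Real.exp (-(a / Z1 ω))
  set W2 : Ω → ℝ := fun ω => Real.exp (-(a⁻¹ / Z2 ω))
  have hY1 : ∀ ω, F2 (c * (σ1 * Z1 ω ^ ξ)) = W1 ω := fun ω => by
    have := hZ1pos ω
    rw [hF2 _ (by positivity), show c * (σ1 * Z1 ω ^ ξ) / σ2 = c * σ1 / σ2 * Z1 ω ^ ξ by ring,
      rpow_neg_inv_mul_rpow hk.le this hξ.ne']
  have hY2 : ∀ ω, F1 (σ2 * Z2 ω ^ ξ / c) = W2 ω := fun ω => by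
    have := hZ2pos ω
    rw [hF1 _ (by positivity), show σ2 * Z2 ω ^ ξ / c / σ1 = (c * σ1 / σ2)⁻¹ * Z2 ω ^ ξ by
      field_simp, rpow_neg_inv_mul_rpow (inv_nonneg.mpr hk.le) this hξ.ne', Real.inv_rpow hk.le]
  have hW1 : Integrable W1 μ := integrable_exp_neg_div hZ1meas (fun ω => (hZ1pos ω).le) ha.le
  have hW2 : Integrable W2 μ :=
    integrable_exp_neg_div hZ2meas (fun ω => (hZ2pos ω).le) (inv_pos.mpr ha).le
  have hM : Integrable (fun ω => 2 * max (W1 ω) (W2 ω)) μ := (hW1.sup hW2).const_mul 2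
  calc (1 / 2) * ∫ ω, |F2 (c * (σ1 * Z1 ω ^ ξ)) - F1 ((σ2 * Z2 ω ^ ξ) / c)| ∂μ
      = (1 / 2) * ((2 * ∫ ω, max (W1 ω) (W2 ω) ∂μ - ∫ ω, W1 ω ∂μ) - ∫ ω, W2 ω ∂μ) := by
        simp_rw [hY1, hY2, abs_sub_eq_two_mul_max_sub_sub]
        rw [integral_sub (show Integrable (fun ω => 2 * max (W1 ω) (W2 ω) - W1 ω) μ from
          hM.sub hW1) hW2, integral_sub hM hW1, integral_const_mul]
    _ = _ := by
        rw [integral_max_exp_neg_div_of_maxStable hZ1meas hZ2meas hZ1pos hZ2pos hVhom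
            hjoint ha (inv_pos.mpr ha),
          integral_exp_neg_div_of_unitFrechet hZ1meas hZ1pos hZ1cdf ha,
          integral_exp_neg_div_of_unitFrechet hZ2meas hZ2pos hZ2cdf (inv_pos.mpr ha),
          ← one_div_mul_one_div 2 (1 + a), ← one_div_mul_one_div 2 (1 + a⁻¹)]
        ring

/-- In the homogeneous bivariate GEV case, with `V` homogeneous of order
`−1`, unit Fréchet margins for `(Z1, Z2)`, `Y_i = σ_i·Z_i^{ξ}`, `a12 = (c·σ1/σ2)^{−1/ξ}`,
`a21 = 1/a12` and `θ_c = V(a12, a21)`, the RFA-madogram equals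
`D(c, Y1, Y2) = θ_c/(θ_c + 1) − 1/(2(1 + a12)) − 1/(2(1 + a21))`. -/
theorem rfa_madogram_formula_homogeneous_GEV
    {Ω : Type*} [MeasurableSpace Ω] (μ : Measure Ω) [IsProbabilityMeasure μ]
    (σ1 σ2 ξ c : ℝ) (hσ1 : 0 < σ1) (hσ2 : 0 < σ2) (hξ : 0 < ξ) (hc : 0 < c)
    (V : ℝ → ℝ → ℝ) (hVpos : ∀ z1 > (0 : ℝ), ∀ z2 > (0 : ℝ), 0 < V z1 z2)
    (hVhom : ∀ t > (0 : ℝ), ∀ z1 > (0 : ℝ), ∀ z2 > (0 : ℝ),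
      V (t * z1) (t * z2) = t⁻¹ * V z1 z2)
    (Z1 Z2 : Ω → ℝ) (hZ1meas : Measurable Z1) (hZ2meas : Measurable Z2)
    (hZ1pos : ∀ ω, 0 < Z1 ω) (hZ2pos : ∀ ω, 0 < Z2 ω)
    (hjoint : ∀ z1 > (0 : ℝ), ∀ z2 > (0 : ℝ),
      (μ {ω | Z1 ω ≤ z1 ∧ Z2 ω ≤ z2}).toReal = Real.exp (-V z1 z2))
    (hZ1cdf : ∀ z > (0 : ℝ), (μ {ω | Z1 ω ≤ z}).toReal = Real.exp (-1 / z))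
    (hZ2cdf : ∀ z > (0 : ℝ), (μ {ω | Z2 ω ≤ z}).toReal = Real.exp (-1 / z))
    (F1 F2 : ℝ → ℝ)
    (hF1 : ∀ x > (0 : ℝ), F1 x = Real.exp (-(x / σ1) ^ (-(1 / ξ))))
    (hF2 : ∀ x > (0 : ℝ), F2 x = Real.exp (-(x / σ2) ^ (-(1 / ξ)))) :
    (1 / 2) * ∫ ω, |F2 (c * (σ1 * Z1 ω ^ ξ)) - F1 ((σ2 * Z2 ω ^ ξ) / c)| ∂μ
      = V ((c * σ1 / σ2) ^ (-(1 / ξ))) (((c * σ1 / σ2) ^ (-(1 / ξ)))⁻¹)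
          / (V ((c * σ1 / σ2) ^ (-(1 / ξ))) (((c * σ1 / σ2) ^ (-(1 / ξ)))⁻¹) + 1)
        - 1 / (2 * (1 + (c * σ1 / σ2) ^ (-(1 / ξ))))
        - 1 / (2 * (1 + ((c * σ1 / σ2) ^ (-(1 / ξ)))⁻¹)) :=
  rfa_madogram_formula_homogeneous_GEV_general μ σ1 σ2 ξ c hσ1 hσ2 hξ hc V hVhom Z1 Z2 hZ1meas
    hZ2meas hZ1pos hZ2pos hjoint hZ1cdf hZ2cdf F1 F2 hF1 hF2
end

section
/- Let α, ξ, σ1, σ2 > 0 and define, for c > 0, a12(c) = (c·σ1/σ2)^{−1/ξ}, θ(c) = ( a12(c)^{−1/α} + a12(c)^{1/α} )^{α} (the logistic exponent function V(x,y) = (x^{−1/α} + y^{−1/α})^{α} evaluated at (a12(c), 1/a12(c))), and g(c) = θ(c)/(1 + θ(c)) − 1/(2·(1 + a12(c))) − 1/(2·(1 + 1/a12(c))). Then g attains its minimum over (0,∞) exactly at c = σ2/σ1, i.e. g(c) ≥ g(σ2/σ1) for all c > 0 with equality if and only if c = σ2/σ1. -/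
/-- `a12(c) = (c·σ1/σ2)^{−1/ξ}`. -/
noncomputable def a12fun (σ1 σ2 ξ c : ℝ) : ℝ := (c * σ1 / σ2) ^ (-(1 / ξ))

/-- The logistic extremal coefficient
`θ(c) = (a12(c)^{−1/α} + a12(c)^{1/α})^{α} = V(a12(c), 1/a12(c))` for the logistic
exponent function `V(x,y) = (x^{−1/α} + y^{−1/α})^{α}`. -/
noncomputable def thetaFun (α σ1 σ2 ξ c : ℝ) : ℝ :=
  ((a12fun σ1 σ2 ξ c) ^ (-(1 / α)) + (a12fun σ1 σ2 ξ c) ^ (1 / α)) ^ α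

/-- The RFA-madogram in the homogeneous logistic bivariate GEV model, as a function of the
rescaling constant `c`:
`g(c) = θ(c)/(1 + θ(c)) − 1/(2(1 + a12(c))) − 1/(2(1 + 1/a12(c)))`. -/
noncomputable def gFun (α σ1 σ2 ξ c : ℝ) : ℝ :=
  thetaFun α σ1 σ2 ξ c / (1 + thetaFun α σ1 σ2 ξ c)
    - 1 / (2 * (1 + a12fun σ1 σ2 ξ c))
    - 1 / (2 * (1 + (a12fun σ1 σ2 ξ c)⁻¹))

private lemma frac_le {x y : ℝ} (hx : 0 < x) (hxy : x ≤ y) :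
    x / (1 + x) ≤ y / (1 + y) := by
  rw [div_le_div_iff₀ (by linarith) (by linarith)]
  nlinarith

private lemma frac_inj {x y : ℝ} (hx : 0 < x) (hy : 0 < y)
    (h : x / (1 + x) = y / (1 + y)) : x = y := by
  rw [div_eq_div_iff (by linarith) (by linarith)] at h
  nlinarith

private lemma theta_lemma (α a : ℝ) (hα : 0 < α) (ha : 0 < a) :
    (2 : ℝ) ^ α ≤ (a ^ (-(1 / α)) + a ^ (1 / α)) ^ α ∧
      ((a ^ (-(1 / α)) + a ^ (1 / α)) ^ α = (2 : ℝ) ^ α ↔ a = 1) := by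
  set t := a ^ (1 / α) with htdef
  have ht : 0 < t := Real.rpow_pos_of_pos ha _
  have hneg : a ^ (-(1 / α)) = t⁻¹ := Real.rpow_neg ha.le _
  have hta : t ^ α = a := by
    rw [htdef, ← Real.rpow_mul ha.le, one_div_mul_cancel hα.ne', Real.rpow_one]
  have h2 : 2 ≤ t⁻¹ + t := by
    have h := sq_nonneg (t - 1)
    have htt : t * t⁻¹ = 1 := mul_inv_cancel₀ ht.ne'
    nlinarith
  rw [hneg]
  have hge : (2 : ℝ) ^ α ≤ (t⁻¹ + t) ^ α :=
    Real.rpow_le_rpow (by norm_num) h2 hα.le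
  refine ⟨hge, ⟨fun h => ?_, fun h => ?_⟩⟩
  · have hsum : t⁻¹ + t = 2 := by
      by_contra hne
      have hlt : 2 < t⁻¹ + t := lt_of_le_of_ne h2 (Ne.symm hne)
      have := Real.rpow_lt_rpow (by norm_num) hlt hα
      linarith [this, h.ge, h.le]
    have ht1 : t = 1 := by
      have h' : t * (t⁻¹ + t) = t * 2 := by rw [hsum]
      rw [mul_add, mul_inv_cancel₀ ht.ne'] at h'
      nlinarith
    rw [← hta, ht1, Real.one_rpow]
  · subst h
    rw [htdef, Real.one_rpow]
    norm_num

private lemma a12_pos (σ1 σ2 ξ c : ℝ) (hc : 0 < c) (hσ1 : 0 < σ1) (hσ2 : 0 < σ2) :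
    0 < a12fun σ1 σ2 ξ c := by
  unfold a12fun
  have : 0 < c * σ1 / σ2 := by positivity
  exact Real.rpow_pos_of_pos this _

private lemma a12_eq_one_iff (σ1 σ2 ξ c : ℝ) (hc : 0 < c) (hξ : 0 < ξ)
    (hσ1 : 0 < σ1) (hσ2 : 0 < σ2) :
    a12fun σ1 σ2 ξ c = 1 ↔ c = σ2 / σ1 := by
  have hb : 0 < c * σ1 / σ2 := by positivity
  constructor
  · intro h
    have hinv : (a12fun σ1 σ2 ξ c) ^ (-ξ) = c * σ1 / σ2 := by
      unfold a12fun
      rw [← Real.rpow_mul hb.le, show -(1 / ξ) * -ξ = 1 by field_simp, Real.rpow_one]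
    rw [h, Real.one_rpow] at hinv
    field_simp
    field_simp at hinv
    linarith
  · intro h
    subst h
    unfold a12fun
    rw [show σ2 / σ1 * σ1 / σ2 = 1 by field_simp, Real.one_rpow]

private lemma gFun_eq (α σ1 σ2 ξ c : ℝ) (ha : 0 < a12fun σ1 σ2 ξ c) :
    gFun α σ1 σ2 ξ c =
      thetaFun α σ1 σ2 ξ c / (1 + thetaFun α σ1 σ2 ξ c) - 1 / 2 := by
  unfold gFun
  set a := a12fun σ1 σ2 ξ c
  have h1 : (0:ℝ) < 1 + a := by linarith
  have h2 : (0:ℝ) < 1 + a⁻¹ := by positivity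
  have : 1 / (2 * (1 + a)) + 1 / (2 * (1 + a⁻¹)) = 1 / 2 := by
    field_simp
    ring
  linarith

/-- In the homogeneous logistic bivariate GEV model, the RFA-madogram
`g` attains its minimum over `(0, ∞)` exactly at `c = σ2/σ1`:
`g(c) ≥ g(σ2/σ1)` for all `c > 0`, with equality if and only if `c = σ2/σ1`. -/
theorem logistic_rfa_madogram_min_iff
    (α ξ σ1 σ2 : ℝ) (hα : 0 < α) (hξ : 0 < ξ) (hσ1 : 0 < σ1) (hσ2 : 0 < σ2) :
    ∀ c > (0 : ℝ),
      gFun α σ1 σ2 ξ (σ2 / σ1) ≤ gFun α σ1 σ2 ξ c ∧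
      (gFun α σ1 σ2 ξ c = gFun α σ1 σ2 ξ (σ2 / σ1) ↔ c = σ2 / σ1) := by
  intro c hc
  have hcstar : (0:ℝ) < σ2 / σ1 := by positivity
  have hac : 0 < a12fun σ1 σ2 ξ c := a12_pos σ1 σ2 ξ c hc hσ1 hσ2
  have hastar : a12fun σ1 σ2 ξ (σ2 / σ1) = 1 :=
    (a12_eq_one_iff σ1 σ2 ξ (σ2/σ1) hcstar hξ hσ1 hσ2).mpr rfl
  have hθstar : thetaFun α σ1 σ2 ξ (σ2 / σ1) = 2 ^ α := by
    unfold thetaFun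
    rw [hastar]
    norm_num
  obtain ⟨hge, hiff⟩ := theta_lemma α (a12fun σ1 σ2 ξ c) hα hac
  have hθc_ge : (2:ℝ) ^ α ≤ thetaFun α σ1 σ2 ξ c := hge
  have hθc_pos : 0 < thetaFun α σ1 σ2 ξ c := by
    have : (0:ℝ) < 2 ^ α := Real.rpow_pos_of_pos (by norm_num) _
    linarith
  have h2pos : (0:ℝ) < 2 ^ α := Real.rpow_pos_of_pos (by norm_num) _
  have hgc := gFun_eq α σ1 σ2 ξ c hac
  have hgstar := gFun_eq α σ1 σ2 ξ (σ2/σ1) (by rw [hastar]; norm_num)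
  rw [hθstar] at hgstar
  constructor
  · rw [hgc, hgstar]
    have := frac_le h2pos hθc_ge
    linarith
  · constructor
    · intro h
      rw [hgc, hgstar] at h
      have hfrac : thetaFun α σ1 σ2 ξ c / (1 + thetaFun α σ1 σ2 ξ c)
          = (2:ℝ)^α / (1 + 2^α) := by linarith
      have hθeq : thetaFun α σ1 σ2 ξ c = 2 ^ α := frac_inj hθc_pos h2pos hfrac
      exact (a12_eq_one_iff σ1 σ2 ξ c hc hξ hσ1 hσ2).mp (hiff.mp hθeq)
    · intro h
      subst h
      rfl
end
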